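/- Let A have restricted isometry constants δ_q with 0 < δ_{2k} < 1 and δ_{3k} > 0. Let x^p ∈ ℝⁿ be k-sparse, u^p = x^p + Aᵀ(y − A x^p), let w^(1), …, w^(ω) ∈ P^k be successive compression minimizers at x^p (ω ≥ 1 an integer), and let x^{p+1} = H_k(u^p ⊗ w^(1) ⊗ ⋯ ⊗ w^(ω)), i.e., a k-sparse vector minimizing ‖u^p ⊗ w^(1) ⊗ ⋯ ⊗ w^(ω) − d‖₂ over k-sparse d (this is the iterate of the ROTω algorithm). Then ‖x^{p+1} − x_S‖₂ ≤ ρ̃·‖x^p − x_S‖₂ + c₁·‖Aᵀν'‖₂ + c₂·‖ν'‖₂, where ρ̃ = (δ_{2k} + 2ω·δ_{3k})·√((1+δ_k)/(1−δ_{2k})) + δ_{3k}, α* = 2δ_{3k}/(2ω·δ_{3k} + δ_{2k}), c₁ = ((2ω−1)/(1−α*))·√((1+δ_k)/(1−δ_{2k})) + 1, and c₂ = 2/((1−α*)·√(1−δ_{2k})). Moreover, if δ_{3k} < 1 and (2ω+1)·δ_{3k}·√((1+δ_{3k})/(1−δ_{3k})) + δ_{3k} < 1, then ρ̃ < 1.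 -/

import Mathlib

open Finset

noncomputable def nsq {ι : Type*} [Fintype ι] (x : ι → ℝ) : ℝ := ∑ i, (x i) ^ 2

noncomputable def n2 {ι : Type*} [Fintype ι] (x : ι → ℝ) : ℝ := Real.sqrt (nsq x)

noncomputable def supp {n : ℕ} (x : Fin n → ℝ) : Finset (Fin n) :=
  Finset.univ.filter (fun i => x i ≠ 0)

def Sparse {n : ℕ} (k : ℕ) (x : Fin n → ℝ) : Prop := (supp x).card ≤ k

def restr {n : ℕ} (x : Fin n → ℝ) (T : Finset (Fin n)) : Fin n → ℝ :=
  fun i => if i ∈ T then x i else 0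

def SatRIP {m n : ℕ} (A : Matrix (Fin m) (Fin n) ℝ) (q : ℕ) (δ : ℝ) : Prop :=
  ∀ z : Fin n → ℝ, Sparse q z →
    (1 - δ) * nsq z ≤ nsq (A.mulVec z) ∧ nsq (A.mulVec z) ≤ (1 + δ) * nsq z

/-- `δ` is the `q`-th order restricted isometry constant of `A`:
the smallest `δ' ≥ 0` such that `(1-δ')‖z‖² ≤ ‖Az‖² ≤ (1+δ')‖z‖²` for all `q`-sparse `z`. -/
def IsRIC {m n : ℕ} (A : Matrix (Fin m) (Fin n) ℝ) (q : ℕ) (δ : ℝ) : Prop :=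
  IsLeast {δ' : ℝ | 0 ≤ δ' ∧ SatRIP A q δ'} δ

/-- membership in `W^k`: binary vectors with exactly `k` entries equal to 1. -/
def InW {n : ℕ} (k : ℕ) (w : Fin n → ℝ) : Prop :=
  (∀ i, w i = 0 ∨ w i = 1) ∧ (Finset.univ.filter (fun i => w i = 1)).card = k

/-- membership in the polytope `P^k`. -/
def InP {n : ℕ} (k : ℕ) (w : Fin n → ℝ) : Prop :=
  (∑ i, w i) = (k : ℝ) ∧ ∀ i, 0 ≤ w i ∧ w i ≤ 1

/-- `S` is an index set of the `k` largest absolute entries of `x`. -/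
def IsTopK {n : ℕ} (x : Fin n → ℝ) (k : ℕ) (S : Finset (Fin n)) : Prop :=
  S.card = k ∧ ∀ i ∈ S, ∀ j ∉ S, |x j| ≤ |x i|

/-- `d` is a hard thresholding `H_k(z)` of `z`. -/
def IsHT {n : ℕ} (k : ℕ) (z d : Fin n → ℝ) : Prop :=
  Sparse k d ∧ ∀ d' : Fin n → ℝ, Sparse k d' → n2 (z - d) ≤ n2 (z - d')

/-- `w 0, …, w (ω-1)` are successive compression minimizers at `x^p` (with `u^p = up`). -/
def SCM {m n : ℕ} (A : Matrix (Fin m) (Fin n) ℝ) (y : Fin m → ℝ) (k ω : ℕ)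
    (up : Fin n → ℝ) (w : ℕ → Fin n → ℝ) : Prop :=
  ∀ j < ω, InP k (w j) ∧ ∀ v : Fin n → ℝ, InP k v →
    n2 (y - A.mulVec (up * (∏ l ∈ Finset.range j, w l) * w j)) ≤
    n2 (y - A.mulVec (up * (∏ l ∈ Finset.range j, w l) * v))

/-- the `ℓ∞` norm of `x` restricted to `T` (zero if `T` is empty). -/
noncomputable def linfT {n : ℕ} (x : Fin n → ℝ) (T : Finset (Fin n)) : ℝ :=
  if h : T.Nonempty then T.sup' h (fun j => |x j|) else 0

/-!
Put `η = u^p - x_S`. Since `y = A x_S + ν'`, `η = (I - AᵀA)(x^p - x_S) + Aᵀν'`, so the RIP bounds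
every `k`-sparse restriction of `η` by `δ ‖x^p - x_S‖ + ‖Aᵀν'‖`. Comparing the `j`-th compression
minimizer with the indicator of `S` shows that each compression step raises the residual
`‖y - A(u^p ⊗ w^(1) ⊗ ⋯ ⊗ w^(j))‖` by at most `‖A(η_{S̄} ⊗ w^(1) ⊗ ⋯ ⊗ w^(j))‖`. As
`v ↦ ‖A(d ⊗ v)‖` is convex and `{v | 0 ≤ v ≤ 1, ∑ v ≤ k}` is the convex hull of the indicators of
sets of at most `k` indices, this is at most `√(1 + δ_k)` times the largest `k`-sparse restriction
of `η`. Hard thresholding keeps the `k` largest entries, so the part of `x_S` it misses is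
bounded by entries of `η` it keeps, and the lower RIP bound of order `2k` turns the final residual
into a bound on the error. The stated constants dominate the ones this argument produces.
-/

open Matrix

section Euclidean

variable {ι : Type*} [Fintype ι]

lemma nsq_eq_dotProduct (x : ι → ℝ) : nsq x = x ⬝ᵥ x := by
  simp only [nsq, dotProduct, sq]

lemma n2_eq_norm (x : ι → ℝ) : n2 x = ‖(WithLp.toLp 2 x : EuclideanSpace ℝ ι)‖ := by
  simp [n2, nsq, EuclideanSpace.norm_eq]

lemma n2_nonneg (x : ι → ℝ) : 0 ≤ n2 x := Real.sqrt_nonneg _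

lemma n2_sq (x : ι → ℝ) : n2 x ^ 2 = nsq x :=
  Real.sq_sqrt (sum_nonneg fun i _ => sq_nonneg (x i))

lemma n2_le_n2_iff {x y : ι → ℝ} : n2 x ≤ n2 y ↔ nsq x ≤ nsq y :=
  Real.sqrt_le_sqrt_iff (sum_nonneg fun i _ => sq_nonneg (y i))

lemma n2_add_le (x y : ι → ℝ) : n2 (x + y) ≤ n2 x + n2 y := by
  simpa only [n2_eq_norm, WithLp.toLp_add] using norm_add_le _ _

lemma n2_neg (x : ι → ℝ) : n2 (-x) = n2 x := by
  simp only [n2_eq_norm, WithLp.toLp_neg, norm_neg]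

lemma n2_sub_le (x y : ι → ℝ) : n2 (x - y) ≤ n2 x + n2 y := by
  simpa only [sub_eq_add_neg, n2_neg] using n2_add_le x (-y)

lemma n2_smul (c : ℝ) (x : ι → ℝ) : n2 (c • x) = |c| * n2 x := by
  simp only [n2_eq_norm, WithLp.toLp_smul, norm_smul, Real.norm_eq_abs]

lemma n2_eq_zero {x : ι → ℝ} : n2 x = 0 ↔ x = 0 := by
  rw [n2_eq_norm, norm_eq_zero, WithLp.toLp_eq_zero]

lemma n2_le_n2_of_abs_le {x y : ι → ℝ} (h : ∀ i, |x i| ≤ |y i|) : n2 x ≤ n2 y :=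
  Real.sqrt_le_sqrt <| sum_le_sum fun i _ => sq_le_sq.mpr (by simpa using h i)

lemma n2_mul_le {x W : ι → ℝ} (hW : ∀ i, |W i| ≤ 1) : n2 (x * W) ≤ n2 x :=
  n2_le_n2_of_abs_le fun i => by
    simpa [abs_mul] using mul_le_of_le_one_right (abs_nonneg (x i)) (hW i)

end Euclidean

section Restriction

variable {n : ℕ}

lemma mem_supp {x : Fin n → ℝ} {i : Fin n} : i ∈ supp x ↔ x i ≠ 0 := by
  simp [supp]

lemma supp_add_subset (a b : Fin n → ℝ) : supp (a + b) ⊆ supp a ∪ supp b := by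
  intro i
  simp only [mem_union, mem_supp, Pi.add_apply]
  contrapose!
  rintro ⟨ha, hb⟩
  simp [ha, hb]

lemma supp_neg (a : Fin n → ℝ) : supp (-a) = supp a := by
  ext i; simp [mem_supp]

lemma supp_sub_subset (a b : Fin n → ℝ) : supp (a - b) ⊆ supp a ∪ supp b := by
  simpa only [sub_eq_add_neg, supp_neg] using supp_add_subset a (-b)

lemma supp_smul_subset (c : ℝ) (a : Fin n → ℝ) : supp (c • a) ⊆ supp a := by
  intro i
  simp only [mem_supp, Pi.smul_apply, smul_eq_mul]
  exact right_ne_zero_of_mul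

lemma supp_restr_subset (x : Fin n → ℝ) (T : Finset (Fin n)) : supp (restr x T) ⊆ T := by
  intro i
  by_cases h : i ∈ T <;> simp [mem_supp, restr, h]

lemma sparse_of_supp_subset {k : ℕ} {x : Fin n → ℝ} {T : Finset (Fin n)} (h : supp x ⊆ T)
    (hT : T.card ≤ k) : Sparse k x :=
  (card_le_card h).trans hT

lemma restr_add (a b : Fin n → ℝ) (T : Finset (Fin n)) :
    restr (a + b) T = restr a T + restr b T := by
  funext i
  simp only [restr, Pi.add_apply]
  split_ifs <;> simp

lemma restr_sub (a b : Fin n → ℝ) (T : Finset (Fin n)) :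
    restr (a - b) T = restr a T - restr b T := by
  funext i
  simp only [restr, Pi.sub_apply]
  split_ifs <;> simp

lemma restr_add_restr_compl (x : Fin n → ℝ) (T : Finset (Fin n)) :
    restr x T + restr x Tᶜ = x := by
  funext i
  by_cases h : i ∈ T <;> simp [restr, h]

lemma sub_restr (x : Fin n → ℝ) (T : Finset (Fin n)) : x - restr x T = restr x Tᶜ :=
  sub_eq_of_eq_add' (restr_add_restr_compl x T).symm

lemma restr_eq_self {x : Fin n → ℝ} {T : Finset (Fin n)} (h : ∀ i ∉ T, x i = 0) :
    restr x T = x := by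
  funext i
  by_cases hi : i ∈ T <;> simp [restr, hi, h]

lemma restr_comm (x : Fin n → ℝ) (M T : Finset (Fin n)) :
    restr (restr x M) T = restr (restr x T) M := by
  funext i
  by_cases hM : i ∈ M <;> by_cases hT : i ∈ T <;> simp [restr, hM, hT]

lemma mul_restr_one (x : Fin n → ℝ) (T : Finset (Fin n)) : x * restr 1 T = restr x T := by
  funext i
  by_cases hi : i ∈ T <;> simp [restr, hi]

lemma restr_mul_of_eq_zero {u W s : Fin n → ℝ} {T : Finset (Fin n)} (hs : ∀ i ∈ T, s i = 0) :
    restr (u * W) T = restr (u - s) T * W := by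
  funext i
  by_cases hi : i ∈ T <;> simp [restr, hi, hs]

lemma abs_restr_le (x : Fin n → ℝ) (T : Finset (Fin n)) (i : Fin n) : |restr x T i| ≤ |x i| := by
  by_cases h : i ∈ T <;> simp [restr, h]

lemma n2_restr_le (x : Fin n → ℝ) (T : Finset (Fin n)) : n2 (restr x T) ≤ n2 x :=
  n2_le_n2_of_abs_le (abs_restr_le x T)

lemma nsq_restr (x : Fin n → ℝ) (T : Finset (Fin n)) : nsq (restr x T) = ∑ i ∈ T, x i ^ 2 := by
  rw [nsq, ← sum_subset (subset_univ T) fun i _ hi => by simp [restr, hi]]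
  exact sum_congr rfl fun i hi => by simp [restr, hi]

lemma restr_dotProduct_restr (x : Fin n → ℝ) (T : Finset (Fin n)) :
    restr x T ⬝ᵥ restr x T = restr x T ⬝ᵥ x := by
  refine sum_congr rfl fun i _ => ?_
  by_cases h : i ∈ T <;> simp [restr, h]

end Restriction

section RIP

variable {m n q : ℕ} {A : Matrix (Fin m) (Fin n) ℝ} {δ : ℝ}

lemma IsRIC.nonneg (h : IsRIC A q δ) : 0 ≤ δ := h.1.1

lemma IsRIC.satRIP (h : IsRIC A q δ) : SatRIP A q δ := h.1.2

lemma IsRIC.mono {q' : ℕ} {δ' : ℝ} (h : IsRIC A q δ) (h' : IsRIC A q' δ') (hq : q ≤ q') :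
    δ ≤ δ' :=
  h.2 ⟨h'.nonneg, fun z hz => h'.satRIP z (hz.trans hq)⟩

lemma SatRIP.n2_mulVec_le (h : SatRIP A q δ) (hδ : 0 ≤ δ) {z : Fin n → ℝ} (hz : Sparse q z) :
    n2 (A *ᵥ z) ≤ √(1 + δ) * n2 z := by
  rw [n2, n2, ← Real.sqrt_mul (by linarith)]
  exact Real.sqrt_le_sqrt (h z hz).2

lemma SatRIP.le_n2_mulVec (h : SatRIP A q δ) (hδ : δ ≤ 1) {z : Fin n → ℝ} (hz : Sparse q z) :
    √(1 - δ) * n2 z ≤ n2 (A *ᵥ z) := by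
  rw [n2, n2, ← Real.sqrt_mul (by linarith)]
  exact Real.sqrt_le_sqrt (h z hz).1

lemma SatRIP.abs_dotProduct_sub_le_half (h : SatRIP A q δ) {a b : Fin n → ℝ}
    (hab : (supp a ∪ supp b).card ≤ q) :
    |A *ᵥ a ⬝ᵥ A *ᵥ b - a ⬝ᵥ b| ≤ δ / 2 * (nsq a + nsq b) := by
  have hadd := h (a + b) (sparse_of_supp_subset (supp_add_subset a b) hab)
  have hsub := h (a - b) (sparse_of_supp_subset (supp_sub_subset a b) hab)
  simp only [nsq_eq_dotProduct, mulVec_add, mulVec_sub, add_dotProduct, dotProduct_add,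
    sub_dotProduct, dotProduct_sub, dotProduct_comm b a, dotProduct_comm (A *ᵥ b)] at hadd hsub ⊢
  rw [abs_le]
  constructor <;> nlinarith [hadd, hsub]

lemma SatRIP.abs_dotProduct_sub_le (h : SatRIP A q δ) {a b : Fin n → ℝ}
    (hab : (supp a ∪ supp b).card ≤ q) :
    |A *ᵥ a ⬝ᵥ A *ᵥ b - a ⬝ᵥ b| ≤ δ * (n2 a * n2 b) := by
  rcases (mul_nonneg (n2_nonneg a) (n2_nonneg b)).eq_or_lt with h0 | hpos
  · rw [← h0, mul_zero, abs_nonpos_iff, sub_eq_zero]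
    rcases mul_eq_zero.mp h0.symm with ha | hb
    · simp [n2_eq_zero.mp ha]
    · simp [n2_eq_zero.mp hb]
  -- scaling `a` and `b` by each other's norms balances the two terms of the polarization bound
  have hscaled := h.abs_dotProduct_sub_le_half (a := n2 b • a) (b := n2 a • b)
    ((card_le_card (union_subset_union (supp_smul_subset _ a) (supp_smul_subset _ b))).trans hab)
  rw [← n2_sq, ← n2_sq, n2_smul, n2_smul, abs_of_nonneg (n2_nonneg a),
    abs_of_nonneg (n2_nonneg b)] at hscaled
  simp only [mulVec_smul, smul_dotProduct, dotProduct_smul, smul_eq_mul] at hscaled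
  refine le_of_mul_le_mul_left ?_ hpos
  calc n2 a * n2 b * |A *ᵥ a ⬝ᵥ A *ᵥ b - a ⬝ᵥ b|
      = |n2 a * (n2 b * (A *ᵥ a ⬝ᵥ A *ᵥ b)) - n2 a * (n2 b * (a ⬝ᵥ b))| := by
        rw [← abs_of_pos hpos, ← abs_mul]
        congr 1
        ring
    _ ≤ _ := hscaled
    _ = n2 a * n2 b * (δ * (n2 a * n2 b)) := by ring

lemma SatRIP.n2_restr_sub_gram_le (h : SatRIP A q δ) (hδ : 0 ≤ δ) {e : Fin n → ℝ}
    {Ω : Finset (Fin n)} (hc : (Ω ∪ supp e).card ≤ q) :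
    n2 (restr (e - Aᵀ *ᵥ (A *ᵥ e)) Ω) ≤ δ * n2 e := by
  have hAt (g : Fin n → ℝ) : g ⬝ᵥ Aᵀ *ᵥ (A *ᵥ e) = A *ᵥ g ⬝ᵥ A *ᵥ e := by
    rw [mulVec_transpose, dotProduct_comm, ← dotProduct_mulVec, dotProduct_comm]
  set g := restr (e - Aᵀ *ᵥ (A *ᵥ e)) Ω
  have hg : n2 g ^ 2 = g ⬝ᵥ e - A *ᵥ g ⬝ᵥ A *ᵥ e := by
    rw [n2_sq, nsq_eq_dotProduct, restr_dotProduct_restr, dotProduct_sub, hAt]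
  have hgc : (supp g ∪ supp e).card ≤ q :=
    (card_le_card (union_subset_union (supp_restr_subset _ _) le_rfl)).trans hc
  have hdot := (abs_le.mp (h.abs_dotProduct_sub_le hgc)).1
  nlinarith [n2_nonneg g, n2_nonneg e, mul_nonneg hδ (n2_nonneg e)]

lemma SatRIP.n2_restr_gradientStep_sub_le (h : SatRIP A q δ) (hδ : 0 ≤ δ)
    {xp up s : Fin n → ℝ} {y ν' : Fin m → ℝ}
    (hy : y = A *ᵥ s + ν') (hup : up = xp + Aᵀ *ᵥ (y - A *ᵥ xp)) {Ω : Finset (Fin n)}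
    (hΩ : (Ω ∪ supp (xp - s)).card ≤ q) :
    n2 (restr (up - s) Ω) ≤ δ * n2 (xp - s) + n2 (Aᵀ *ᵥ ν') := by
  have hη : up - s = (xp - s - Aᵀ *ᵥ (A *ᵥ (xp - s))) + Aᵀ *ᵥ ν' := by
    rw [hup, hy]
    simp only [mulVec_sub, mulVec_add]
    abel
  rw [hη, restr_add]
  exact (n2_add_le _ _).trans (add_le_add (h.n2_restr_sub_gram_le hδ hΩ) (n2_restr_le _ _))

lemma n2_restr_gradientStep_sub_le_of_sparse {k : ℕ} {δ2 δ3 : ℝ} (h2 : SatRIP A (2 * k) δ2)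
    (hδ2 : 0 ≤ δ2) (h3 : SatRIP A (3 * k) δ3) (hδ3 : 0 ≤ δ3) {xp up s : Fin n → ℝ}
    {y ν' : Fin m → ℝ} (hy : y = A *ᵥ s + ν') (hup : up = xp + Aᵀ *ᵥ (y - A *ᵥ xp))
    {S : Finset (Fin n)} (hS : S.card ≤ k) (hs : ∀ i ∉ S, s i = 0) (hxp : Sparse k xp) :
    n2 (restr (up - s) S) ≤ δ2 * n2 (xp - s) + n2 (Aᵀ *ᵥ ν') ∧
      ∀ T : Finset (Fin n), T.card ≤ k →
        n2 (restr (up - s) T) ≤ δ3 * n2 (xp - s) + n2 (Aᵀ *ᵥ ν') := by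
  have hsS : supp s ⊆ S := fun i hi => by_contra fun h => mem_supp.mp hi (hs i h)
  have hsupp : supp (xp - s) ⊆ S ∪ supp xp := (supp_sub_subset _ _).trans
    (union_subset subset_union_right (hsS.trans subset_union_left))
  have hxpk : (supp xp).card ≤ k := hxp
  have hSxp : (S ∪ supp xp).card ≤ 2 * k := (card_union_le _ _).trans (by omega)
  refine ⟨h2.n2_restr_gradientStep_sub_le hδ2 hy hup
    ((card_le_card (union_subset subset_union_left hsupp)).trans hSxp), fun T hT => ?_⟩
  exact h3.n2_restr_gradientStep_sub_le hδ3 hy hup ((card_le_card (union_subset_union le_rfl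
    hsupp)).trans ((card_union_le T (S ∪ supp xp)).trans (by omega)))

end RIP

section CappedCube

variable {ι : Type*} [Fintype ι] {k : ℕ} {v : ι → ℝ}

def cappedCube (ι : Type*) [Fintype ι] (k : ℕ) : Set (ι → ℝ) :=
  {v | (∀ i, 0 ≤ v i ∧ v i ≤ 1) ∧ ∑ i, v i ≤ k}

noncomputable def fracCoords (v : ι → ℝ) : Finset ι := univ.filter fun i => v i ≠ 0 ∧ v i ≠ 1

lemma mem_fracCoords {i : ι} : i ∈ fracCoords v ↔ v i ≠ 0 ∧ v i ≠ 1 := by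
  simp [fracCoords]

lemma eq_indicator_of_fracCoords_eq_empty (h : fracCoords v = ∅) :
    v = (↑(univ.filter fun i => v i = 1) : Set ι).indicator 1 := by
  funext i
  have hi : v i = 0 ∨ v i = 1 := by
    by_contra! hne
    simp [← mem_fracCoords, h] at hne
  rcases hi with hi | hi <;> simp [hi]

lemma sum_eq_card_of_fracCoords_eq_empty (h : fracCoords v = ∅) :
    ∑ i, v i = (univ.filter fun i => v i = 1).card := by
  conv_lhs => rw [eq_indicator_of_fracCoords_eq_empty h]
  simp [Set.indicator_apply]

lemma fracCoords_subset_erase [DecidableEq ι] {a : ι → ℝ} {i : ι}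
    (hagree : ∀ l ∉ fracCoords v, a l = v l) (hai : a i = 0 ∨ a i = 1) :
    fracCoords a ⊆ (fracCoords v).erase i := by
  intro l hl
  rw [mem_fracCoords] at hl
  refine mem_erase.mpr ⟨?_, ?_⟩
  · rintro rfl
    tauto
  · by_contra hlv
    rw [hagree l hlv, ← mem_fracCoords] at hl
    exact hlv hl

lemma card_fracCoords_lt [DecidableEq ι] {a : ι → ℝ} {i : ι}
    (hagree : ∀ l ∉ fracCoords v, a l = v l) (hi : i ∈ fracCoords v) (hai : a i = 0 ∨ a i = 1) :
    (fracCoords a).card < (fracCoords v).card :=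
  (card_le_card (fracCoords_subset_erase hagree hai)).trans_lt (card_erase_lt_of_mem hi)

lemma mem_segment_add_smul_sub_smul {E : Type*} [AddCommGroup E] [Module ℝ E] (x e : E)
    {s t : ℝ} (hs : 0 < s) (ht : 0 < t) : x ∈ segment ℝ (x + s • e) (x - t • e) := by
  refine ⟨t / (s + t), s / (s + t), by positivity, by positivity, by field_simp; ring, ?_⟩
  match_scalars <;> field_simp <;> ring

lemma exists_shift_mem_cappedCube [DecidableEq ι] (hv : v ∈ cappedCube ι k) {i j : ι}
    (hij : i ≠ j) (hi : i ∈ fracCoords v) (hj : j ∈ fracCoords v) :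
    ∃ s : ℝ, 0 < s ∧ v + s • (Pi.single i 1 - Pi.single j 1) ∈ cappedCube ι k ∧
      (fracCoords (v + s • (Pi.single i 1 - Pi.single j 1))).card < (fracCoords v).card := by
  obtain ⟨hvi0, hvi1⟩ := hv.1 i
  obtain ⟨hvj0, hvj1⟩ := hv.1 j
  have hi' := mem_fracCoords.mp hi
  have hj' := mem_fracCoords.mp hj
  set s := min (1 - v i) (v j) with hs_def
  have hs : 0 < s := lt_min (by grind) (by grind)
  set a := v + s • (Pi.single i (1 : ℝ) - Pi.single j 1)
  have hai : a i = v i + s := by simp [a, hij]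
  have haj : a j = v j - s := by simp [a, hij.symm, sub_eq_add_neg]
  have hal (l : ι) (hli : l ≠ i) (hlj : l ≠ j) : a l = v l := by simp [a, hli, hlj]
  have hagree (l : ι) (hl : l ∉ fracCoords v) : a l = v l :=
    hal l (by rintro rfl; exact hl hi) (by rintro rfl; exact hl hj)
  have hsi := min_le_left (1 - v i) (v j)
  have hsj := min_le_right (1 - v i) (v j)
  refine ⟨s, hs, ?_, ?_⟩
  · show a ∈ cappedCube ι k
    refine ⟨fun l => ?_, by simpa [a, sum_add_distrib, ← mul_sum, sum_sub_distrib] using hv.2⟩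
    rcases eq_or_ne l i with rfl | hli
    · rw [hai]
      constructor <;> linarith
    rcases eq_or_ne l j with rfl | hlj
    · rw [haj]
      constructor <;> linarith
    rw [hal l hli hlj]
    exact hv.1 l
  · rcases min_cases (1 - v i) (v j) with ⟨h, -⟩ | ⟨h, -⟩
    · exact card_fracCoords_lt hagree hi (Or.inr (show a i = 1 by rw [hai, hs_def, h]; ring))
    · exact card_fracCoords_lt hagree hj (Or.inl (show a j = 0 by rw [haj, hs_def, h]; ring))

lemma single_shift_mem_cappedCube [DecidableEq ι] (hv : v ∈ cappedCube ι k) {i : ι}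
    (hfrac : fracCoords v = {i}) :
    (v + (1 - v i) • Pi.single i 1 ∈ cappedCube ι k ∧
        fracCoords (v + (1 - v i) • Pi.single i 1) = ∅) ∧
      (v - v i • Pi.single i 1 ∈ cappedCube ι k ∧ fracCoords (v - v i • Pi.single i 1) = ∅) := by
  have hi : i ∈ fracCoords v := by simp [hfrac]
  have hvi := lt_of_le_of_ne (hv.1 i).1 (Ne.symm (mem_fracCoords.mp hi).1)
  set b := v + (1 - v i) • Pi.single i (1 : ℝ)
  set a := v - v i • Pi.single i (1 : ℝ)
  have hbi : b i = 1 := by simp [b]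
  have hai : a i = 0 := by simp [a]
  have hbl (l : ι) (hl : l ≠ i) : b l = v l := by simp [b, hl]
  have hal (l : ι) (hl : l ≠ i) : a l = v l := by simp [a, hl]
  have hfrac_eq {c : ι → ℝ} (hcl : ∀ l, l ≠ i → c l = v l) (hci : c i = 0 ∨ c i = 1) :
      fracCoords c = ∅ := by
    simpa [hfrac] using fracCoords_subset_erase (fun l hl => hcl l (by rintro rfl; exact hl hi)) hci
  have hfb := hfrac_eq hbl (Or.inr hbi)
  have hfa := hfrac_eq hal (Or.inl hai)
  have hbox {c : ι → ℝ} (hcl : ∀ l, l ≠ i → c l = v l) (hci : c i = 0 ∨ c i = 1) (l : ι) :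
      0 ≤ c l ∧ c l ≤ 1 := by
    rcases eq_or_ne l i with rfl | hl
    · rcases hci with h | h <;> simp [h]
    · rw [hcl l hl]
      exact hv.1 l
  refine ⟨⟨⟨hbox hbl (Or.inr hbi), ?_⟩, hfb⟩, ⟨⟨hbox hal (Or.inl hai), ?_⟩, hfa⟩⟩
  · -- `∑ b` is an integer exceeding `∑ v ≤ k` by less than one
    have hsb : ∑ l, b l = ∑ l, v l + (1 - v i) := by simp [b, sum_add_distrib, ← mul_sum]
    have hcard := sum_eq_card_of_fracCoords_eq_empty hfb
    have hlt : ((univ.filter fun l => b l = 1).card : ℝ) < k + 1 := by linarith [hv.2]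
    rw [hcard]
    exact_mod_cast Nat.lt_succ_iff.mp (by exact_mod_cast hlt)
  · have hsa : ∑ l, a l = ∑ l, v l - v i := by simp [a, sum_sub_distrib, ← mul_sum]
    linarith [hv.2]

lemma exists_segment_reduction [DecidableEq ι] (hv : v ∈ cappedCube ι k) {i : ι}
    (hi : i ∈ fracCoords v) :
    ∃ (e : ι → ℝ) (s t : ℝ), 0 < s ∧ 0 < t ∧
      (v + s • e ∈ cappedCube ι k ∧ (fracCoords (v + s • e)).card < (fracCoords v).card) ∧
      (v - t • e ∈ cappedCube ι k ∧ (fracCoords (v - t • e)).card < (fracCoords v).card) := by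
  by_cases hj : ∃ j ∈ fracCoords v, j ≠ i
  · obtain ⟨j, hj, hji⟩ := hj
    obtain ⟨s, hs, ha⟩ := exists_shift_mem_cappedCube hv hji.symm hi hj
    obtain ⟨t, ht, hb⟩ := exists_shift_mem_cappedCube hv hji hj hi
    refine ⟨_, s, t, hs, ht, ha, ?_⟩
    rwa [← neg_sub, smul_neg, ← sub_eq_add_neg] at hb
  · push Not at hj
    have hfrac : fracCoords v = {i} := eq_singleton_iff_unique_mem.mpr ⟨hi, hj⟩
    obtain ⟨hvi0, hvi1⟩ := mem_fracCoords.mp hi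
    obtain ⟨⟨hb, hfb⟩, ⟨ha, hfa⟩⟩ := single_shift_mem_cappedCube hv hfrac
    refine ⟨Pi.single i 1, 1 - v i, v i, ?_, ?_, ⟨hb, by simp [hfb, hfrac]⟩,
      ⟨ha, by simp [hfa, hfrac]⟩⟩
    · linarith [lt_of_le_of_ne (hv.1 i).2 hvi1]
    · exact lt_of_le_of_ne (hv.1 i).1 (Ne.symm hvi0)

theorem cappedCube_subset_convexHull :
    cappedCube ι k ⊆
      convexHull ℝ {u | ∃ T : Finset ι, T.card ≤ k ∧ u = (↑T : Set ι).indicator 1} := by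
  classical
  intro v hv
  induction hN : (fracCoords v).card using Nat.strong_induction_on generalizing v with
  | _ N ih =>
    rcases (fracCoords v).eq_empty_or_nonempty with h0 | ⟨i, hi⟩
    · refine subset_convexHull ℝ _ ⟨_, ?_, eq_indicator_of_fracCoords_eq_empty h0⟩
      exact_mod_cast (sum_eq_card_of_fracCoords_eq_empty h0).symm.trans_le hv.2
    · obtain ⟨e, s, t, hs, ht, ⟨ha, hac⟩, ⟨hb, hbc⟩⟩ := exists_segment_reduction hv hi
      exact (convex_convexHull ℝ _).segment_subset (ih _ (hN ▸ hac) ha rfl)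
        (ih _ (hN ▸ hbc) hb rfl) (mem_segment_add_smul_sub_smul v e hs ht)

end CappedCube

lemma convexOn_n2_mulVec_mul {m ι : Type*} [Fintype m] [Fintype ι] (A : Matrix m ι ℝ)
    (d : ι → ℝ) : ConvexOn ℝ Set.univ fun v => n2 (A *ᵥ (d * v)) := by
  refine ⟨convex_univ, fun a _ b _ s t hs ht _ => ?_⟩
  simp only [smul_eq_mul, mul_add, mul_smul_comm, mulVec_add, mulVec_smul]
  calc _ ≤ n2 (s • A *ᵥ (d * a)) + n2 (t • A *ᵥ (d * b)) := n2_add_le _ _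
    _ = _ := by rw [n2_smul, n2_smul, abs_of_nonneg hs, abs_of_nonneg ht]

lemma SatRIP.n2_mulVec_mul_le {m n k : ℕ} {A : Matrix (Fin m) (Fin n) ℝ} {δ : ℝ}
    (h : SatRIP A k δ) (hδ : 0 ≤ δ) {d : Fin n → ℝ} {B : ℝ}
    (hd : ∀ T : Finset (Fin n), T.card ≤ k → n2 (restr d T) ≤ B) {v : Fin n → ℝ}
    (hv : v ∈ cappedCube (Fin n) k) : n2 (A *ᵥ (d * v)) ≤ √(1 + δ) * B := by
  obtain ⟨u, ⟨T, hT, rfl⟩, hle⟩ := (convexOn_n2_mulVec_mul A d).exists_ge_of_mem_convexHull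
    (Set.subset_univ _) (cappedCube_subset_convexHull hv)
  have hdT : d * (↑T : Set (Fin n)).indicator 1 = restr d T := by
    funext i
    by_cases hi : i ∈ T <;> simp [restr, hi]
  rw [hdT] at hle
  calc _ ≤ _ := hle
    _ ≤ √(1 + δ) * n2 (restr d T) :=
      h.n2_mulVec_le hδ (sparse_of_supp_subset (supp_restr_subset d T) hT)
    _ ≤ _ := mul_le_mul_of_nonneg_left (hd T hT) (Real.sqrt_nonneg _)

section HardThresholding

variable {n k : ℕ} {z d : Fin n → ℝ}

lemma IsHT.eq_restr_supp (h : IsHT k z d) : d = restr z (supp d) := by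
  set T := supp d
  have hd0 (i : Fin n) (hi : i ∉ T) : d i = 0 := by simpa [T, mem_supp] using hi
  have hle (i : Fin n) (_ : i ∈ univ) : (z - restr z T) i ^ 2 ≤ (z - d) i ^ 2 := by
    by_cases hi : i ∈ T <;> simp [restr, hi, hd0, sq_nonneg]
  have hopt : nsq (z - d) ≤ nsq (z - restr z T) :=
    n2_le_n2_iff.mp (h.2 _ (sparse_of_supp_subset (supp_restr_subset z T) h.1))
  have heq := (sum_eq_sum_iff_of_le hle).mp (le_antisymm (sum_le_sum hle) hopt)
  funext i
  by_cases hi : i ∈ T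
  · have := heq i (mem_univ i)
    simp only [restr, hi, if_true, Pi.sub_apply, sub_self] at this
    simpa [hi, restr, sub_eq_zero, eq_comm] using this
  · simp [restr, hi, hd0 i hi]

lemma IsHT.n2_restr_sdiff_le (h : IsHT k z d) {S : Finset (Fin n)} (hS : S.card ≤ k) :
    n2 (restr z (S \ supp d)) ≤ n2 (restr z (supp d \ S)) := by
  have hopt := h.2 _ (sparse_of_supp_subset (supp_restr_subset z S) hS)
  rw [h.eq_restr_supp, sub_restr, sub_restr, n2_le_n2_iff, nsq_restr, nsq_restr] at hopt
  rw [n2_le_n2_iff, nsq_restr, nsq_restr, sum_sdiff_le_sum_sdiff]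
  linarith [sum_add_sum_compl S fun i => z i ^ 2, sum_add_sum_compl (supp d) fun i => z i ^ 2]

end HardThresholding

lemma le_add_mul_of_succ_le {r : ℕ → ℝ} {G : ℝ} {ω : ℕ}
    (h : ∀ j, 1 ≤ j → j < ω → r (j + 1) ≤ r j + G) {j : ℕ} (hj : 1 ≤ j) (hjω : j ≤ ω) :
    r j ≤ r 1 + (j - 1) * G := by
  induction j, hj using Nat.le_induction with
  | base => simp
  | succ j hj ih =>
    have := h j hj hjω
    have := ih (by omega)
    push_cast
    linarith

section Iteration

variable {m n k ω : ℕ} {A : Matrix (Fin m) (Fin n) ℝ} {y : Fin m → ℝ} {up : Fin n → ℝ}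
  {w : ℕ → Fin n → ℝ}

lemma SCM.prod_mem_cappedCube (hw : SCM A y k ω up w) {J : ℕ} (hJ0 : 0 < J) (hJ : J ≤ ω) :
    ∏ l ∈ range J, w l ∈ cappedCube (Fin n) k := by
  obtain ⟨J, rfl⟩ := Nat.exists_eq_add_one_of_ne_zero hJ0.ne'
  have hbox (l : ℕ) (hl : l ≤ J) (i : Fin n) : 0 ≤ w l i ∧ w l i ≤ 1 := (hw l (by omega)).1.2 i
  have htail (i : Fin n) : 0 ≤ ∏ l ∈ range J, w (l + 1) i ∧ ∏ l ∈ range J, w (l + 1) i ≤ 1 :=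
    ⟨prod_nonneg fun l hl => (hbox _ (by simp at hl; omega) i).1,
      prod_le_one (fun l hl => (hbox _ (by simp at hl; omega) i).1)
        fun l hl => (hbox _ (by simp at hl; omega) i).2⟩
  have hprod (i : Fin n) : (∏ l ∈ range (J + 1), w l) i = (∏ l ∈ range J, w (l + 1) i) * w 0 i := by
    rw [prod_apply, prod_range_succ']
  refine ⟨fun i => ?_, ?_⟩
  · rw [hprod]
    exact ⟨mul_nonneg (htail i).1 (hbox 0 (by omega) i).1,
      mul_le_one₀ (htail i).2 (hbox 0 (by omega) i).1 (hbox 0 (by omega) i).2⟩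
  · calc ∑ i, (∏ l ∈ range (J + 1), w l) i ≤ ∑ i, w 0 i := sum_le_sum fun i _ => by
          rw [hprod]
          exact mul_le_of_le_one_left (hbox 0 (by omega) i).1 (htail i).2
      _ = k := (hw 0 (by omega)).1.1

lemma SCM.n2_mulVec_restr_mul_prod_le (hw : SCM A y k ω up w) {J : ℕ} (hJ0 : 0 < J)
    (hJ : J ≤ ω) {δ : ℝ} (hA : SatRIP A k δ) (hδ : 0 ≤ δ) {η : Fin n → ℝ} {b : ℝ}
    (hb : ∀ T : Finset (Fin n), T.card ≤ k → n2 (restr η T) ≤ b) (M : Finset (Fin n)) :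
    n2 (A *ᵥ (restr η M * ∏ l ∈ range J, w l)) ≤ √(1 + δ) * b :=
  hA.n2_mulVec_mul_le hδ (fun T hT => by rw [restr_comm]; exact (n2_restr_le _ _).trans (hb T hT))
    (hw.prod_mem_cappedCube hJ0 hJ)

lemma SCM.residual_succ_le (hw : SCM A y k ω up w) {S : Finset (Fin n)} (hS : S.card = k)
    {j : ℕ} (hj : j < ω) :
    n2 (y - A *ᵥ (up * ∏ l ∈ range (j + 1), w l)) ≤
      n2 (y - A *ᵥ restr (up * ∏ l ∈ range j, w l) S) := by
  have hS1 : InP k (restr 1 S) := by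
    refine ⟨?_, fun i => ?_⟩
    · simp [restr, ← hS]
    · by_cases hi : i ∈ S <;> simp [restr, hi]
  simpa [prod_range_succ, ← mul_assoc, mul_restr_one] using (hw j hj).2 _ hS1

lemma n2_sub_mulVec_restr_le (z : Fin n → ℝ) (S : Finset (Fin n)) :
    n2 (y - A *ᵥ restr z S) ≤ n2 (y - A *ᵥ z) + n2 (A *ᵥ restr z Sᶜ) := by
  have hz : A *ᵥ z = A *ᵥ restr z S + A *ᵥ restr z Sᶜ := by
    rw [← mulVec_add, restr_add_restr_compl]
  calc _ = n2 ((y - A *ᵥ z) + A *ᵥ restr z Sᶜ) := by rw [hz]; congr 1; abel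
    _ ≤ _ := n2_add_le _ _

lemma SCM.residual_le (hw : SCM A y k ω up w) (hω : 1 ≤ ω) {S : Finset (Fin n)}
    (hS : S.card = k) {s : Fin n → ℝ} (hs : ∀ i ∉ S, s i = 0) {ν' : Fin m → ℝ}
    (hy : y = A *ᵥ s + ν') {δ a b : ℝ} (hA : SatRIP A k δ) (hδ : 0 ≤ δ)
    (ha : n2 (restr (up - s) S) ≤ a)
    (hb : ∀ T : Finset (Fin n), T.card ≤ k → n2 (restr (up - s) T) ≤ b) :
    n2 (y - A *ᵥ (up * ∏ l ∈ range ω, w l)) ≤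
      √(1 + δ) * a + n2 ν' + (ω - 1) * (√(1 + δ) * b) := by
  set r : ℕ → ℝ := fun j => n2 (y - A *ᵥ (up * ∏ l ∈ range j, w l))
  have hr1 : r 1 ≤ √(1 + δ) * a + n2 ν' := by
    have hsplit : restr up S = s + restr (up - s) S := by
      rw [restr_sub, restr_eq_self hs]
      abel
    have hAη := hA.n2_mulVec_le hδ (sparse_of_supp_subset (supp_restr_subset (up - s) S) hS.le)
    calc r 1 ≤ n2 (y - A *ᵥ restr up S) := by simpa [r] using hw.residual_succ_le hS hω
      _ = n2 (ν' - A *ᵥ restr (up - s) S) := by rw [hsplit, mulVec_add, hy]; congr 1; abel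
      _ ≤ n2 ν' + √(1 + δ) * n2 (restr (up - s) S) := (n2_sub_le _ _).trans (by gcongr)
      _ ≤ _ := by nlinarith [Real.sqrt_nonneg (1 + δ)]
  have hstep (j : ℕ) (hj : 1 ≤ j) (hjω : j < ω) : r (j + 1) ≤ r j + √(1 + δ) * b := by
    have hsS (i : Fin n) (hi : i ∈ Sᶜ) : s i = 0 := hs i (mem_compl.mp hi)
    calc r (j + 1) ≤ r j + n2 (A *ᵥ restr (up * ∏ l ∈ range j, w l) Sᶜ) :=
          (hw.residual_succ_le hS hjω).trans (n2_sub_mulVec_restr_le _ _)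
      _ ≤ r j + √(1 + δ) * b := by
          rw [restr_mul_of_eq_zero hsS]
          gcongr
          exact hw.n2_mulVec_restr_mul_prod_le hj hjω.le hA hδ hb _
  linarith [le_add_mul_of_succ_le hstep hω le_rfl]

end Iteration

lemma IsHT.n2_sub_le_residual {m n k : ℕ} {A : Matrix (Fin m) (Fin n) ℝ} {y ν' : Fin m → ℝ}
    {up W xq s : Fin n → ℝ} (hxq : IsHT k (up * W) xq) (hW : W ∈ cappedCube (Fin n) k)
    {S : Finset (Fin n)} (hS : S.card ≤ k) (hs : ∀ i ∉ S, s i = 0)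
    (hy : y = A *ᵥ s + ν') {δ : ℝ} (hA : SatRIP A (2 * k) δ) (hδ : δ < 1) {b G : ℝ}
    (hb : ∀ T : Finset (Fin n), T.card ≤ k → n2 (restr (up - s) T) ≤ b)
    (hG : n2 (A *ᵥ (restr (up - s) (S ∪ supp xq)ᶜ * W)) ≤ G) :
    n2 (xq - s) ≤ b + (n2 (y - A *ᵥ (up * W)) + n2 ν' + G) / √(1 - δ) := by
  set z := up * W
  set D := S ∪ supp xq
  have hxqk : (supp xq).card ≤ k := hxq.1
  have hD : D.card ≤ 2 * k := (card_union_le _ _).trans (by omega)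
  have hsD (i : Fin n) (hi : i ∉ D) : s i = 0 := hs i fun h => hi (mem_union_left _ h)
  have hW1 (i : Fin n) : |W i| ≤ 1 := abs_le.mpr ⟨by linarith [(hW.1 i).1], (hW.1 i).2⟩
  have hdecomp : xq - s = restr (z - s) D - restr z (S \ supp xq) := by
    conv_lhs => rw [hxq.eq_restr_supp]
    funext i
    by_cases hiS : i ∈ S <;> by_cases hiT : i ∈ supp xq <;> simp [restr, D, hiS, hiT, hs]
  have hout : n2 (restr z (S \ supp xq)) ≤ b :=
    calc _ ≤ n2 (restr z (supp xq \ S)) := hxq.n2_restr_sdiff_le hS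
      _ = n2 (restr (up - s) (supp xq \ S) * W) := by
          rw [restr_mul_of_eq_zero fun i hi => hs i (mem_sdiff.mp hi).2]
      _ ≤ b := (n2_mul_le hW1).trans (hb _ ((card_le_card sdiff_subset).trans hxqk))
  have hin : √(1 - δ) * n2 (restr (z - s) D) ≤ n2 (y - A *ᵥ z) + n2 ν' + G :=
    calc _ ≤ n2 (A *ᵥ restr (z - s) D) :=
          hA.le_n2_mulVec hδ.le (sparse_of_supp_subset (supp_restr_subset _ _) hD)
      _ = n2 (ν' - (y - A *ᵥ z) - A *ᵥ (restr (up - s) Dᶜ * W)) := by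
          rw [← restr_mul_of_eq_zero fun i hi => hsD i (mem_compl.mp hi), restr_sub,
            restr_eq_self hsD, eq_sub_of_add_eq (restr_add_restr_compl z D), mulVec_sub,
            mulVec_sub, hy]
          congr 1
          abel
      _ ≤ n2 ν' + n2 (y - A *ᵥ z) + G := (n2_sub_le _ _).trans (by gcongr; exact n2_sub_le _ _)
      _ = _ := by ring
  rw [hdecomp, add_comm b]
  exact (n2_sub_le _ _).trans
    (add_le_add ((le_div_iff₀' (Real.sqrt_pos.mpr (by linarith))).mpr hin) hout)

lemma alphaStar_bounds {c δ2 δ3 : ℝ} (hc : 1 ≤ c) (h2 : 0 < δ2) (h23 : δ2 ≤ δ3) :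
    0 < 1 - 2 * δ3 / (2 * c * δ3 + δ2) ∧ 1 - 2 * δ3 / (2 * c * δ3 + δ2) ≤ 1 ∧
      c + 1 ≤ (2 * c - 1) / (1 - 2 * δ3 / (2 * c * δ3 + δ2)) := by
  have hden : 0 < 2 * c * δ3 + δ2 := by nlinarith
  have hnum : 0 < 2 * (c - 1) * δ3 + δ2 := by nlinarith
  have h1α : 1 - 2 * δ3 / (2 * c * δ3 + δ2) = (2 * (c - 1) * δ3 + δ2) / (2 * c * δ3 + δ2) := by
    rw [one_sub_div hden.ne']
    ring
  rw [h1α]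
  refine ⟨by positivity, (div_le_one hden).mpr (by nlinarith), ?_⟩
  rw [div_div_eq_mul_div, le_div_iff₀ hnum]
  nlinarith [mul_nonneg (sub_nonneg.mpr h23) (by nlinarith : (0 : ℝ) ≤ c ^ 2 - c + 1),
    mul_nonneg h2.le (by nlinarith : (0 : ℝ) ≤ c * (2 * c - 1))]

lemma rot_coefficients_le {c δk δ2 δ3 P Q R : ℝ} (hc : 1 ≤ c) (hδk : 0 ≤ δk) (h2 : 0 < δ2)
    (h2' : δ2 < 1) (h23 : δ2 ≤ δ3) (hP : 0 ≤ P) (hQ : 0 ≤ Q) (hR : 0 ≤ R) :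
    δ3 * P + Q + (√(1 + δk) * (δ2 * P + Q) + R + (c - 1) * (√(1 + δk) * (δ3 * P + Q)) + R
        + √(1 + δk) * (δ3 * P + Q)) / √(1 - δ2) ≤
      ((δ2 + 2 * c * δ3) * √((1 + δk) / (1 - δ2)) + δ3) * P
        + ((2 * c - 1) / (1 - 2 * δ3 / (2 * c * δ3 + δ2)) * √((1 + δk) / (1 - δ2)) + 1) * Q
        + (2 / ((1 - 2 * δ3 / (2 * c * δ3 + δ2)) * √(1 - δ2))) * R := by
  obtain ⟨hα0, hα1, hαc⟩ := alphaStar_bounds hc h2 h23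
  set α := 2 * δ3 / (2 * c * δ3 + δ2)
  have hs2 : 0 < √(1 - δ2) := Real.sqrt_pos.mpr (by linarith)
  have hκ : √(1 + δk) = √((1 + δk) / (1 - δ2)) * √(1 - δ2) := by
    rw [Real.sqrt_div (by linarith) (1 - δ2), div_mul_cancel₀ _ hs2.ne']
  set κ := √((1 + δk) / (1 - δ2))
  have hκ0 : 0 ≤ κ := Real.sqrt_nonneg _
  have hlhs : δ3 * P + Q + (√(1 + δk) * (δ2 * P + Q) + R + (c - 1) * (√(1 + δk) * (δ3 * P + Q))
      + R + √(1 + δk) * (δ3 * P + Q)) / √(1 - δ2) =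
      (κ * (δ2 + c * δ3) + δ3) * P + (κ * (c + 1) + 1) * Q + 2 / √(1 - δ2) * R := by
    rw [hκ]
    field_simp
    ring
  have hRc : 2 / √(1 - δ2) ≤ 2 / ((1 - α) * √(1 - δ2)) :=
    div_le_div_of_nonneg_left zero_le_two (by positivity) (mul_le_of_le_one_left hs2.le hα1)
  rw [hlhs]
  gcongr ?_ * P + ?_ * Q + ?_ * R
  · nlinarith [mul_nonneg hκ0 (mul_nonneg (by linarith : (0 : ℝ) ≤ c) (h2.le.trans h23))]
  · nlinarith [mul_le_mul_of_nonneg_left hαc hκ0]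

lemma rho_lt_one {c δk δ2 δ3 : ℝ} (hc : 0 ≤ c) (h2 : 0 ≤ δ2) (hk3 : δk ≤ δ3) (h23 : δ2 ≤ δ3)
    (h3 : δ3 < 1) (hsmall : (2 * c + 1) * δ3 * √((1 + δ3) / (1 - δ3)) + δ3 < 1) :
    (δ2 + 2 * c * δ3) * √((1 + δk) / (1 - δ2)) + δ3 < 1 := by
  have hsq : √((1 + δk) / (1 - δ2)) ≤ √((1 + δ3) / (1 - δ3)) :=
    Real.sqrt_le_sqrt (div_le_div₀ (by linarith) (by linarith) (by linarith) (by linarith))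
  have : (δ2 + 2 * c * δ3) * √((1 + δk) / (1 - δ2)) ≤ (2 * c + 1) * δ3 * √((1 + δ3) / (1 - δ3)) :=
    mul_le_mul (by nlinarith) hsq (Real.sqrt_nonneg _) (by nlinarith)
  linarith

theorem stmt10_general
    {m n : ℕ} (A : Matrix (Fin m) (Fin n) ℝ)
    (x : Fin n → ℝ) (ν y : Fin m → ℝ) (hy : y = A.mulVec x + ν)
    (k : ℕ)
    (S : Finset (Fin n)) (hS : IsTopK x k S)
    (ν' : Fin m → ℝ) (hν' : ν' = A.mulVec (restr x Sᶜ) + ν)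
    (ω : ℕ) (hω : 1 ≤ ω)
    (δk δ2k δ3k : ℝ) (hδk : IsRIC A k δk) (hδ2k : IsRIC A (2 * k) δ2k)
    (hδ3k : IsRIC A (3 * k) δ3k)
    (hδ2kpos : 0 < δ2k) (hδ2klt : δ2k < 1)
    (xp : Fin n → ℝ) (hxp : Sparse k xp)
    (up : Fin n → ℝ) (hup : up = xp + A.transpose.mulVec (y - A.mulVec xp))
    (w : ℕ → Fin n → ℝ) (hw : SCM A y k ω up w)
    (xq : Fin n → ℝ) (hxq : IsHT k (up * ∏ l ∈ Finset.range ω, w l) xq) :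
    n2 (xq - restr x S)
        ≤ ((δ2k + 2 * (ω : ℝ) * δ3k) * Real.sqrt ((1 + δk) / (1 - δ2k)) + δ3k)
              * n2 (xp - restr x S)
          + ((2 * (ω : ℝ) - 1) / (1 - 2 * δ3k / (2 * (ω : ℝ) * δ3k + δ2k))
              * Real.sqrt ((1 + δk) / (1 - δ2k)) + 1) * n2 (A.transpose.mulVec ν')
          + (2 / ((1 - 2 * δ3k / (2 * (ω : ℝ) * δ3k + δ2k)) * Real.sqrt (1 - δ2k)))
              * n2 ν'
      ∧ (δ3k < 1 →
          (2 * (ω : ℝ) + 1) * δ3k * Real.sqrt ((1 + δ3k) / (1 - δ3k)) + δ3k < 1 →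
          (δ2k + 2 * (ω : ℝ) * δ3k) * Real.sqrt ((1 + δk) / (1 - δ2k)) + δ3k < 1) := by
  have hδk0 := hδk.nonneg
  have hδ23 : δ2k ≤ δ3k := hδ2k.mono hδ3k (by omega)
  have hδk3 : δk ≤ δ3k := hδk.mono hδ3k (by omega)
  refine ⟨?_, fun h3 hsmall => rho_lt_one (by positivity) hδ2kpos.le hδk3 hδ23 h3 hsmall⟩
  set s := restr x S
  have hs (i : Fin n) (hi : i ∉ S) : s i = 0 := by simp [s, restr, hi]
  have hy' : y = A *ᵥ s + ν' := by
    rw [hy, hν', ← add_assoc, ← mulVec_add, restr_add_restr_compl]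
  obtain ⟨ha, hb⟩ := n2_restr_gradientStep_sub_le_of_sparse hδ2k.satRIP hδ2k.nonneg
    hδ3k.satRIP hδ3k.nonneg hy' hup hS.1.le hs hxp
  have hres := hw.residual_le hω hS.1 hs hy' hδk.satRIP hδk0 ha hb
  have herr := hxq.n2_sub_le_residual (hw.prod_mem_cappedCube hω le_rfl) hS.1.le hs hy'
    hδ2k.satRIP hδ2klt hb (hw.n2_mulVec_restr_mul_prod_le hω le_rfl hδk.satRIP hδk0 hb _)
  refine herr.trans (le_trans ?_ (rot_coefficients_le (by exact_mod_cast hω) hδk0 hδ2kpos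
    hδ2klt hδ23 (n2_nonneg _) (n2_nonneg _) (n2_nonneg _)))
  gcongr

theorem stmt10
    {m n : ℕ} (A : Matrix (Fin m) (Fin n) ℝ)
    (x : Fin n → ℝ) (ν y : Fin m → ℝ) (hy : y = A.mulVec x + ν)
    (k : ℕ) (hk : 0 < k)
    (S : Finset (Fin n)) (hS : IsTopK x k S)
    (ν' : Fin m → ℝ) (hν' : ν' = A.mulVec (restr x Sᶜ) + ν)
    (ω : ℕ) (hω : 1 ≤ ω)
    (δk δ2k δ3k : ℝ) (hδk : IsRIC A k δk) (hδ2k : IsRIC A (2 * k) δ2k)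
    (hδ3k : IsRIC A (3 * k) δ3k)
    (hδ2kpos : 0 < δ2k) (hδ2klt : δ2k < 1) (hδ3kpos : 0 < δ3k)
    (xp : Fin n → ℝ) (hxp : Sparse k xp)
    (up : Fin n → ℝ) (hup : up = xp + A.transpose.mulVec (y - A.mulVec xp))
    (w : ℕ → Fin n → ℝ) (hw : SCM A y k ω up w)
    (xq : Fin n → ℝ) (hxq : IsHT k (up * ∏ l ∈ Finset.range ω, w l) xq) :
    n2 (xq - restr x S)
        ≤ ((δ2k + 2 * (ω : ℝ) * δ3k) * Real.sqrt ((1 + δk) / (1 - δ2k)) + δ3k)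
              * n2 (xp - restr x S)
          + ((2 * (ω : ℝ) - 1) / (1 - 2 * δ3k / (2 * (ω : ℝ) * δ3k + δ2k))
              * Real.sqrt ((1 + δk) / (1 - δ2k)) + 1) * n2 (A.transpose.mulVec ν')
          + (2 / ((1 - 2 * δ3k / (2 * (ω : ℝ) * δ3k + δ2k)) * Real.sqrt (1 - δ2k)))
              * n2 ν'
      ∧ (δ3k < 1 →
          (2 * (ω : ℝ) + 1) * δ3k * Real.sqrt ((1 + δ3k) / (1 - δ3k)) + δ3k < 1 →
          (δ2k + 2 * (ω : ℝ) * δ3k) * Real.sqrt ((1 + δk) / (1 - δ2k)) + δ3k < 1) :=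
  stmt10_general A x ν y hy k S hS ν' hν' ω hω δk δ2k δ3k hδk hδ2k hδ3k hδ2kpos hδ2klt xp hxp up hup
    w hw xq hxq
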